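/- Let G be a connected graph with at least 2 vertices, H a graph with n vertices. Then G[H] is distance preserving if and only if for every pair a, b ∈ dp(G) bounding a non-dp interval one has b ≤ an + 1, where dp(G) is the set of orders of isometric subgraphs of G. -/

import Mathlib

open SimpleGraph

variable {α β : Type*}

/-- The lexicographic product `G[H]`. -/
def lexProd (G : SimpleGraph α) (H : SimpleGraph β) : SimpleGraph (α × β) where
  Adj p q := G.Adj p.1 q.1 ∨ (p.1 = q.1 ∧ H.Adj p.2 q.2)
  symm := by
    constructor
    rintro ⟨u, x⟩ ⟨v, y⟩ (h | ⟨h1, h2⟩)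
    · exact Or.inl h.symm
    · exact Or.inr ⟨h1.symm, h2.symm⟩
  loopless := by
    constructor
    rintro ⟨u, x⟩ (h | ⟨-, h⟩)
    · exact G.loopless.irrefl u h
    · exact H.loopless.irrefl x h

/-- The induced subgraph on `S` is an isometric subgraph of `G`. -/
def IsometricSet (G : SimpleGraph α) (S : Set α) : Prop :=
  ∀ a b : S, (G.induce S).edist a b = G.edist a.1 b.1

/-- The set of orders of isometric (induced) subgraphs of `G`. -/
def dpSet (G : SimpleGraph α) : Set ℕ :=
  {k | ∃ S : Finset α, S.card = k ∧ IsometricSet G ↑S}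

/-- `G` is distance preserving. -/
def IsDP [Fintype α] (G : SimpleGraph α) : Prop :=
  G.Connected ∧ ∀ i : ℕ, 1 ≤ i → i ≤ Fintype.card α → i ∈ dpSet G

/-- `l` is an sdp sequence for `G`. -/
def IsSdpList [Fintype α] (G : SimpleGraph α) (l : List α) : Prop :=
  l.Nodup ∧ (∀ v : α, v ∈ l) ∧
    ∀ s : ℕ, IsometricSet G {v : α | v ∉ l.take s}

/-- `G` is sequentially distance preserving. -/
def IsSDP [Fintype α] (G : SimpleGraph α) : Prop :=
  G.Connected ∧ ∃ l : List α, IsSdpList G l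

/-!
Distances in `G[H]` between different `G`-fibres are the `G`-distances of the fibres, while two
non-adjacent vertices of one fibre are at distance `2` through any neighbour of that fibre. Hence,
as long as no vertex of its projection `B` is isolated in `G[B]`, a vertex set of `G[H]` is
isometric exactly when its projection to `G` is. So every `i ∈ dp(G[H])` lies in `[c, c * n]`
for some `c ∈ dp(G)`, every such interval with `c ≥ 2` lies in `dp(G[H])`, and these intervals
cover `[2, |G| * n]` exactly when every gap `(a, b)` of `dp(G)` satisfies `b ≤ a * n + 1`.
-/

section Metric

variable {γ δ : Type*} {G : SimpleGraph γ} {K : SimpleGraph δ}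

lemma edist_map_le_of_adj_or_eq (f : γ → δ)
    (hf : ∀ {a b}, G.Adj a b → f a = f b ∨ K.Adj (f a) (f b)) (a b : γ) :
    K.edist (f a) (f b) ≤ G.edist a b := by
  by_cases hr : G.Reachable a b
  · obtain ⟨w, hw⟩ := hr.exists_walk_length_eq_edist
    rw [← hw]
    clear hw hr
    induction w with
    | nil => simp
    | @cons u v w h p ih =>
      calc K.edist (f u) (f w) ≤ K.edist (f u) (f v) + K.edist (f v) (f w) :=
            SimpleGraph.edist_triangle
        _ ≤ 1 + p.length := add_le_add (edist_le_one_iff_adj_or_eq.2 (hf h).symm) ih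
        _ = (p.cons h).length := by push_cast [Walk.length_cons]; ring
  · rw [edist_eq_top_of_not_reachable hr]
    exact le_top

lemma SimpleGraph.Hom.edist_le (f : G →g K) (a b : γ) : K.edist (f a) (f b) ≤ G.edist a b :=
  edist_map_le_of_adj_or_eq f (fun h => Or.inr (f.map_adj h)) a b

lemma two_le_edist_of_not_adj {u v : γ} (hne : u ≠ v) (hadj : ¬G.Adj u v) :
    2 ≤ G.edist u v := by
  by_contra! h
  have h1 : G.edist u v ≤ 1 := Order.le_of_lt_add_one h
  exact (edist_le_one_iff_adj_or_eq.1 h1).elim hadj hne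

end Metric

section Isometric

variable {G : SimpleGraph α} {S : Set α}

lemma edist_le_edist_induce (S : Set α) (a b : S) : G.edist a b ≤ (G.induce S).edist a b :=
  Hom.edist_le (Embedding.induce S).toHom a b

lemma isometricSet_iff_le :
    IsometricSet G S ↔ ∀ a b : S, (G.induce S).edist a b ≤ G.edist a b :=
  ⟨fun h a b => (h a b).le, fun h a b => (h a b).antisymm (edist_le_edist_induce S a b)⟩

lemma isometricSet_univ : IsometricSet G Set.univ :=
  isometricSet_iff_le.2 fun a b =>
    Hom.edist_le (⟨fun v => ⟨v, trivial⟩, id⟩ : G →g G.induce Set.univ) a b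

lemma Set.Subsingleton.isometricSet (hS : S.Subsingleton) : IsometricSet G S := fun a b => by
  rw [Subtype.ext (hS a.2 b.2), edist_self, edist_self]

lemma isometricSet_pair {u v : α} (h : G.Adj u v) : IsometricSet G {u, v} := by
  rintro ⟨a, ha⟩ ⟨b, hb⟩
  rcases eq_or_ne a b with rfl | hne
  · rw [edist_self, edist_self]
  have hab : G.Adj a b := by
    simp only [Set.mem_insert_iff, Set.mem_singleton_iff] at ha hb
    rcases ha with rfl | rfl <;> rcases hb with rfl | rfl
    exacts [absurd rfl hne, h, h.symm, absurd rfl hne]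
  rw [edist_eq_one_iff_adj.2 (show (G.induce {u, v}).Adj ⟨a, ha⟩ ⟨b, hb⟩ from hab),
    edist_eq_one_iff_adj.2 hab]

lemma IsometricSet.preconnected_induce (hG : G.Preconnected) (hS : IsometricSet G S) :
    (G.induce S).Preconnected := fun a b =>
  reachable_of_edist_ne_top (by rw [hS]; exact edist_ne_top_iff_reachable.2 (hG a b))

lemma IsometricSet.exists_adj (hG : G.Preconnected) (hS : IsometricSet G S)
    (hS2 : S.Nontrivial) {u : α} (hu : u ∈ S) : ∃ v ∈ S, G.Adj u v := by
  have : Nontrivial S := Set.nontrivial_coe_sort.2 hS2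
  obtain ⟨v, hv⟩ := (hS.preconnected_induce hG).exists_adj_of_nontrivial ⟨u, hu⟩
  exact ⟨v, v.2, hv⟩

lemma one_mem_dpSet [Nonempty α] : 1 ∈ dpSet G :=
  ⟨{Classical.arbitrary α}, Finset.card_singleton _, by
    simpa using (Set.subsingleton_singleton (a := Classical.arbitrary α)).isometricSet⟩

lemma two_mem_dpSet {u v : α} (h : G.Adj u v) : 2 ∈ dpSet G := by
  classical
  exact ⟨{u, v}, Finset.card_pair h.ne, by simpa using isometricSet_pair h⟩

lemma card_mem_dpSet [Fintype α] : Fintype.card α ∈ dpSet G :=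
  ⟨Finset.univ, Finset.card_univ, by simpa using isometricSet_univ⟩

lemma le_card_of_mem_dpSet [Fintype α] {k : ℕ} (h : k ∈ dpSet G) : k ≤ Fintype.card α := by
  obtain ⟨S, rfl, -⟩ := h
  exact S.card_le_univ

end Isometric

section LexProd

variable {G : SimpleGraph α} {H : SimpleGraph β}

@[simp]
lemma lexProd_adj {p q : α × β} :
    (lexProd G H).Adj p q ↔ G.Adj p.1 q.1 ∨ (p.1 = q.1 ∧ H.Adj p.2 q.2) :=
  Iff.rfl

lemma edist_fst_le_edist_lexProd (p q : α × β) : G.edist p.1 q.1 ≤ (lexProd G H).edist p q :=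
  edist_map_le_of_adj_or_eq Prod.fst
    (fun h => (lexProd_adj.1 h).elim Or.inr (Or.inl ∘ And.left)) p q

lemma lexProd_edist_of_ne {u v : α} (h : u ≠ v) (x y : β) :
    (lexProd G H).edist (u, x) (v, y) = G.edist u v := by
  classical
  refine le_antisymm ?_ (edist_fst_le_edist_lexProd (u, x) (v, y))
  let f := Function.update (fun _ => x) v y
  have hf : (lexProd G H).edist (u, f u) (v, f v) ≤ G.edist u v :=
    Hom.edist_le (⟨fun w => (w, f w), Or.inl⟩ : G →g lexProd G H) u v
  simpa [f, h] using hf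

lemma lexProd_connected [Nontrivial α] [Nonempty β] (hG : G.Connected) :
    (lexProd G H).Connected := by
  have reach {u v : α} (h : u ≠ v) (x y : β) : (lexProd G H).Reachable (u, x) (v, y) :=
    reachable_of_edist_ne_top <| by
      rw [lexProd_edist_of_ne h]; exact edist_ne_top_iff_reachable.2 (hG u v)
  refine (connected_iff _).2 ⟨?_, inferInstance⟩
  rintro ⟨u, x⟩ ⟨v, y⟩
  rcases eq_or_ne u v with rfl | huv
  · obtain ⟨w, hw⟩ := exists_ne u
    exact (reach hw.symm x x).trans (reach hw x y)
  · exact reach huv x y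

lemma isometricSet_image_fst {S : Set (α × β)} (hS : IsometricSet (lexProd G H) S) :
    IsometricSet G (Prod.fst '' S) := by
  refine isometricSet_iff_le.2 ?_
  rintro ⟨_, p, hp, rfl⟩ ⟨_, q, hq, rfl⟩
  rcases eq_or_ne p.1 q.1 with he | hne
  · simp [he]
  let π : S → Prod.fst '' S := fun z => ⟨z.1.1, z.1, z.2, rfl⟩
  calc (G.induce _).edist (π ⟨p, hp⟩) (π ⟨q, hq⟩)
      ≤ ((lexProd G H).induce S).edist ⟨p, hp⟩ ⟨q, hq⟩ :=
        edist_map_le_of_adj_or_eq π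
          (fun h => (lexProd_adj.1 h).elim Or.inr (fun h => Or.inl (Subtype.ext h.1))) _ _
    _ = (lexProd G H).edist p q := hS _ _
    _ = G.edist p.1 q.1 := lexProd_edist_of_ne hne p.2 q.2

lemma edist_induce_lexProd_le_of_section {S : Set (α × β)} {B : Set α} (t : B → S)
    (ht : ∀ b, (t b).1.1 = b.1) (a b : B) :
    ((lexProd G H).induce S).edist (t a) (t b) ≤ (G.induce B).edist a b :=
  Hom.edist_le
    ⟨t, fun {a b} h => Or.inl (show G.Adj (t a).1.1 (t b).1.1 by rw [ht, ht]; exact h)⟩ a b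

lemma isometricSet_lexProd_of_image_fst {S : Set (α × β)}
    (hB : IsometricSet G (Prod.fst '' S))
    (hnbr : ∀ u ∈ Prod.fst '' S, ∃ v ∈ Prod.fst '' S, G.Adj u v) :
    IsometricSet (lexProd G H) S := by
  classical
  set B := Prod.fst '' S
  have hsurj (b : B) : ∃ z : S, z.1.1 = b.1 := by
    obtain ⟨_, z, hz, rfl⟩ := b
    exact ⟨⟨z, hz⟩, rfl⟩
  choose s hs using hsurj
  let π : S → B := fun z => ⟨z.1.1, z.1, z.2, rfl⟩
  refine isometricSet_iff_le.2 fun p q => ?_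
  rcases eq_or_ne p.1.1 q.1.1 with hfst | hfst
  · by_cases hadj : (lexProd G H).Adj p q
    · rw [edist_eq_one_iff_adj.2 hadj]
      exact edist_le_one_iff_adj_or_eq.2 (Or.inl hadj)
    rcases eq_or_ne p q with rfl | hpq
    · simp
    obtain ⟨v, hvB, hv⟩ := hnbr _ (π p).2
    have hpr : ((lexProd G H).induce S).Adj p (s ⟨v, hvB⟩) :=
      Or.inl (show G.Adj p.1.1 (s _).1.1 by rw [hs]; exact hv)
    have hrq : ((lexProd G H).induce S).Adj (s ⟨v, hvB⟩) q :=
      Or.inl (show G.Adj (s _).1.1 q.1.1 by rw [hs, ← hfst]; exact hv.symm)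
    calc ((lexProd G H).induce S).edist p q ≤ 2 := by
          simpa using (Walk.cons hpr (Walk.cons hrq Walk.nil)).edist_le
      _ ≤ (lexProd G H).edist p q :=
        two_le_edist_of_not_adj (Subtype.coe_injective.ne hpq) hadj
  · -- modify the section so that it passes through `p` and `q`
    have hπ : π p ≠ π q := fun h => hfst (congrArg Subtype.val h)
    let s' := Function.update (Function.update s (π p) p) (π q) q
    have hs' (b : B) : (s' b).1.1 = b.1 := by
      simp only [s', Function.update_apply]
      split_ifs with hq hp
      exacts [hq ▸ rfl, hp ▸ rfl, hs b]
    calc ((lexProd G H).induce S).edist p q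
        = ((lexProd G H).induce S).edist (s' (π p)) (s' (π q)) := by simp [s', hπ]
      _ ≤ (G.induce B).edist (π p) (π q) := edist_induce_lexProd_le_of_section s' hs' _ _
      _ = G.edist p.1.1 q.1.1 := hB _ _
      _ = (lexProd G H).edist p q := (lexProd_edist_of_ne hfst _ _).symm

lemma exists_mem_dpSet_of_mem_dpSet_lexProd [Fintype β] {i : ℕ}
    (hi : i ∈ dpSet (lexProd G H)) :
    ∃ c ∈ dpSet G, c ≤ i ∧ i ≤ c * Fintype.card β := by
  classical
  obtain ⟨S, rfl, hS⟩ := hi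
  refine ⟨(S.image Prod.fst).card, ⟨_, rfl, by simpa using isometricSet_image_fst hS⟩,
    Finset.card_image_le, ?_⟩
  calc S.card ≤ (S.image Prod.fst ×ˢ Finset.univ).card :=
        Finset.card_le_card fun z hz =>
          Finset.mem_product.2 ⟨Finset.mem_image_of_mem _ hz, Finset.mem_univ _⟩
    _ = _ := by rw [Finset.card_product, Finset.card_univ]

lemma mem_dpSet_lexProd [Fintype β] [Nonempty β] (hG : G.Preconnected) {c i : ℕ}
    (hc : c ∈ dpSet G) (hc2 : 2 ≤ c) (hci : c ≤ i) (hic : i ≤ c * Fintype.card β) :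
    i ∈ dpSet (lexProd G H) := by
  classical
  obtain ⟨B, rfl, hB⟩ := hc
  obtain ⟨y⟩ := ‹Nonempty β›
  have hsub : B.image (·, y) ⊆ B ×ˢ Finset.univ := by
    simp [Finset.subset_iff]
  obtain ⟨S, hBS, hSB, rfl⟩ := Finset.exists_subsuperset_card_eq (n := i) hsub
    (by rwa [Finset.card_image_of_injective _ (Prod.mk_left_injective y)])
    (by rwa [Finset.card_product, Finset.card_univ])
  have himage : Prod.fst '' (S : Set (α × β)) = B := by
    refine Set.Subset.antisymm ?_ fun u hu => ⟨(u, y), hBS (by simpa using hu), rfl⟩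
    rintro _ ⟨z, hz, rfl⟩
    exact (Finset.mem_product.1 (hSB hz)).1
  have hBnt : (B : Set α).Nontrivial := Finset.one_lt_card_iff_nontrivial.1 hc2
  refine ⟨S, rfl, isometricSet_lexProd_of_image_fst (himage ▸ hB) ?_⟩
  rw [himage]
  exact fun u hu => hB.exists_adj hG hBnt hu

end LexProd

lemma exists_mem_le_le_mul_of_gaps {D : Set ℕ} {m n N i : ℕ} (hn : 1 ≤ n) (hm : m ∈ D)
    (hN : N ∈ D)
    (hgap : ∀ a b : ℕ, a ∈ D → b ∈ D → (∃ c : ℕ, a < c ∧ c < b) →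
      (∀ c : ℕ, a < c → c < b → c ∉ D) → b ≤ a * n + 1)
    (hmi : m ≤ i) (hiN : i ≤ N * n) : ∃ c ∈ D, m ≤ c ∧ c ≤ i ∧ i ≤ c * n := by
  classical
  -- `c` is the largest element of `D` up to `i`, `b` the smallest one beyond `i`
  set c := Nat.findGreatest (· ∈ D) i
  have hcD : c ∈ D := Nat.findGreatest_spec hmi hm
  refine ⟨c, hcD, Nat.le_findGreatest hmi hm, Nat.findGreatest_le i, ?_⟩
  by_contra! hci
  have hcc : c ≤ c * n := Nat.le_mul_of_pos_right c hn
  have hiN' : i < N := by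
    by_contra! hNi
    have : N * n ≤ c * n := Nat.mul_le_mul_right n (Nat.le_findGreatest hNi hN)
    omega
  have hex : ∃ b, b ∈ D ∧ i < b := ⟨N, hN, hiN'⟩
  obtain ⟨hbD, hib⟩ := Nat.find_spec hex
  have hbc := hgap c (Nat.find hex) hcD hbD ⟨i, by omega, hib⟩ fun k hck hkb hkD =>
    if hki : k ≤ i then Nat.findGreatest_is_greatest hck hki hkD
    else Nat.find_min hex hkb ⟨hkD, by omega⟩
  omega

theorem stmt_3 (G : SimpleGraph α) (H : SimpleGraph β)
    (hG : G.Connected) [Fintype α] (hcard : 2 ≤ Fintype.card α)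
    [Fintype β] [Nonempty β] :
    IsDP (lexProd G H) ↔
      ∀ a b : ℕ, a ∈ dpSet G → b ∈ dpSet G →
        (∃ c : ℕ, a < c ∧ c < b) →
        (∀ c : ℕ, a < c → c < b → c ∉ dpSet G) →
        b ≤ a * Fintype.card β + 1 := by
  have : Nontrivial α := Fintype.one_lt_card_iff_nontrivial.1 hcard
  have hn : 1 ≤ Fintype.card β := Fintype.card_pos
  constructor
  · rintro ⟨-, hDP⟩ a b - hb - hgap
    by_contra! hba
    have hbN := le_card_of_mem_dpSet hb
    obtain ⟨c, hc, hca, hac⟩ := exists_mem_dpSet_of_mem_dpSet_lexProd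
      (hDP (a * Fintype.card β + 1) le_add_self (by rw [Fintype.card_prod]; nlinarith))
    exact hgap c (Nat.lt_of_mul_lt_mul_right (by omega : a * Fintype.card β < c * Fintype.card β))
      (by omega) hc
  · intro hgap
    refine ⟨lexProd_connected hG, fun i hi1 hiN => ?_⟩
    rcases hi1.eq_or_lt with rfl | hi2
    · exact one_mem_dpSet
    obtain ⟨w, hvw⟩ := hG.preconnected.exists_adj_of_nontrivial (Classical.arbitrary α)
    rw [Fintype.card_prod] at hiN
    obtain ⟨c, hc, hc2, hci, hic⟩ :=
      exists_mem_le_le_mul_of_gaps hn (two_mem_dpSet hvw) card_mem_dpSet hgap hi2 hiN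
    exact mem_dpSet_lexProd hG.preconnected hc hc2 hci hic
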